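/- arXiv:math/0505443 — 3 statements merged into one kernel-verified Lean document; each statement's English description precedes it below -/
import Mathlib

section
/- Let u, v : I → ℝ be smooth functions on an interval I with v̈(t) + v̇(t)³ ≠ 1 for all t ∈ I. Define x(t) = v(t), y(t) = (v̇(t)²·u(t) + u̇(t)) / (v̈(t) + v̇(t)³ − 1), z(t) = ((1 − v̈(t))·u(t) + v̇(t)·u̇(t)) / (v̈(t) + v̇(t)³ − 1). Then (x, y, z) satisfies ż(t) = y(t) + (ẏ(t) − z(t)ẋ(t))·ẋ(t) for all t ∈ I. -/
open Set

/-- The explicit formulas of Example 2.4: for any smooth `u, v` on an open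
interval `I` with `v̈ + v̇³ ≠ 1`, the functions
`x = v`, `y = (v̇²u + u̇)/(v̈ + v̇³ − 1)`, `z = ((1 − v̈)u + v̇u̇)/(v̈ + v̇³ − 1)`
solve `ż = y + (ẏ − zẋ)·ẋ` on `I`. -/
theorem stmt2 (I : Set ℝ) (hI : IsOpen I) (u v : ℝ → ℝ)
    (hu : ContDiffOn ℝ (⊤ : ℕ∞) u I) (hv : ContDiffOn ℝ (⊤ : ℕ∞) v I)
    (hden : ∀ t ∈ I, deriv (deriv v) t + (deriv v t) ^ 3 ≠ 1)
    (x y z : ℝ → ℝ)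
    (hx : ∀ t, x t = v t)
    (hy : ∀ t, y t = ((deriv v t) ^ 2 * u t + deriv u t) /
      (deriv (deriv v) t + (deriv v t) ^ 3 - 1))
    (hz : ∀ t, z t = ((1 - deriv (deriv v) t) * u t + deriv v t * deriv u t) /
      (deriv (deriv v) t + (deriv v t) ^ 3 - 1)) :
    ∀ t ∈ I, deriv z t = y t + (deriv y t - z t * deriv x t) * deriv x t := by
  have hxv : x = v := funext hx
  have hyf : y = fun s => ((deriv v s) ^ 2 * u s + deriv u s) /
      (deriv (deriv v) s + (deriv v s) ^ 3 - 1) := funext hy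
  have hzf : z = fun s => ((1 - deriv (deriv v) s) * u s + deriv v s * deriv u s) /
      (deriv (deriv v) s + (deriv v s) ^ 3 - 1) := funext hz
  intro t ht
  simp only [hxv, hyf, hzf]
  set p := deriv v with hp
  set q := deriv (deriv v) with hq
  have hmem := hI.mem_nhds ht
  have hvC1 : ContDiffOn ℝ (⊤ : ℕ∞) p I := hv.deriv_of_isOpen hI (m := (⊤ : ℕ∞)) (by simp)
  have hvC2 : ContDiffOn ℝ (⊤ : ℕ∞) q I := hvC1.deriv_of_isOpen hI (m := (⊤ : ℕ∞)) (by simp)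
  have huC1 : ContDiffOn ℝ (⊤ : ℕ∞) (deriv u) I := hu.deriv_of_isOpen hI (m := (⊤ : ℕ∞)) (by simp)
  have hv1 : HasDerivAt v (p t) t :=
    ((hv.differentiableOn (by simp)).differentiableAt hmem).hasDerivAt
  have hv2 : HasDerivAt p (q t) t :=
    ((hvC1.differentiableOn (by simp)).differentiableAt hmem).hasDerivAt
  have hv3 : HasDerivAt q (deriv q t) t :=
    ((hvC2.differentiableOn (by simp)).differentiableAt hmem).hasDerivAt
  have hu1 : HasDerivAt u (deriv u t) t :=
    ((hu.differentiableOn (by simp)).differentiableAt hmem).hasDerivAt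
  have hu2 : HasDerivAt (deriv u) (deriv (deriv u) t) t :=
    ((huC1.differentiableOn (by simp)).differentiableAt hmem).hasDerivAt
  have hD0 : q t + p t ^ 3 - 1 ≠ 0 := sub_ne_zero.mpr (hden t ht)
  have hD := (hv3.add (hv2.pow 3)).sub_const 1
  have hNy : HasDerivAt (fun s => p s ^ 2 * u s + deriv u s)
      ((2 * p t ^ 1 * q t) * u t + p t ^ 2 * deriv u t + deriv (deriv u) t) t :=
    ((hv2.pow 2).mul hu1).add hu2
  have hNz : HasDerivAt (fun s => (1 - q s) * u s + p s * deriv u s)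
      ((-(deriv q t)) * u t + (1 - q t) * deriv u t
        + (q t * deriv u t + p t * deriv (deriv u) t)) t :=
    ((hv3.const_sub 1).mul hu1).add (hv2.mul hu2)
  have hyd : deriv (fun s => (p s ^ 2 * u s + deriv u s) / (q s + p s ^ 3 - 1)) t = _ := (hNy.div hD hD0).deriv
  have hzd : deriv (fun s => ((1 - q s) * u s + p s * deriv u s) / (q s + p s ^ 3 - 1)) t = _ := (hNz.div hD hD0).deriv
  simp only [Pi.add_apply, Pi.pow_apply] at hyd hzd
  rw [hzd, hyd]
  field_simp
  ring
end

section
/- With x, y, z defined from u, v as in the parameterization x = v, y = (v̇²u + u̇)/(v̈ + v̇³ − 1), z = ((1 − v̈)u + v̇u̇)/(v̈ + v̇³ − 1) (assuming v̈ + v̇³ ≠ 1), one recovers the arbitrary functions via u(t) = −z(t) + y(t)·ẋ(t) and v(t) = x(t) for all t. -/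
open Set

/-- Inversion of the Monge parameterization of Example 2.4: with
`x = v`, `y = (v̇²u + u̇)/(v̈ + v̇³ − 1)`, `z = ((1 − v̈)u + v̇u̇)/(v̈ + v̇³ − 1)`
(assuming `v̈ + v̇³ ≠ 1` on `I`), one recovers `u = −z + y·ẋ` and `v = x` on `I`. -/
theorem stmt3 (I : Set ℝ) (hI : IsOpen I) (u v : ℝ → ℝ)
    (hu : ContDiffOn ℝ (⊤ : ℕ∞) u I) (hv : ContDiffOn ℝ (⊤ : ℕ∞) v I)
    (hden : ∀ t ∈ I, deriv (deriv v) t + (deriv v t) ^ 3 ≠ 1)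
    (x y z : ℝ → ℝ)
    (hx : ∀ t, x t = v t)
    (hy : ∀ t, y t = ((deriv v t) ^ 2 * u t + deriv u t) /
      (deriv (deriv v) t + (deriv v t) ^ 3 - 1))
    (hz : ∀ t, z t = ((1 - deriv (deriv v) t) * u t + deriv v t * deriv u t) /
      (deriv (deriv v) t + (deriv v t) ^ 3 - 1)) :
    ∀ t ∈ I, u t = -z t + y t * deriv x t ∧ v t = x t := by
  intro t ht
  have hxv : x = v := funext hx
  refine ⟨?_, (hx t).symm⟩
  have hD : deriv (deriv v) t + (deriv v t) ^ 3 - 1 ≠ 0 :=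
    sub_ne_zero.mpr (hden t ht)
  rw [hy, hz, hxv]
  field_simp
  ring
end

section
/- Let k, ℓ ≥ 0 be integers, p a smooth function of (u, u̇, …, u^{(k−1)}, x, v, v̇, …, v^{(ℓ−1)}), r a smooth function of (u, …, u^{(k−1)}, x, v, …, v^{(ℓ)}) with ∂r/∂v^{(ℓ)} nowhere zero, and f a smooth function of four variables, such that the identity Σ_{i=0}^{k−2} u^{(i+1)} p_{u^{(i)}} + r·p_{u^{(k−1)}} + Σ_{i=0}^{ℓ−1} v^{(i+1)} p_{v^{(i)}} = f(x, p, p_x, p_{xx}) holds identically (empty sums/terms if k or ℓ is too small). Then either p depends on x only (all partial derivatives of p with respect to the u^{(i)} and v^{(i)} vanish identically), or else k ≥ 1, ℓ ≥ 1, p_{u^{(k−1)}} is not identically zero and p_{v^{(ℓ−1)}} is not identically zero. -/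
/-- Partial derivative of `p(u,…,u^{(k−1)}, x, v,…,v^{(ℓ−1)})` with respect
to `u^{(i)}`. -/
noncomputable def dU {k l : ℕ} (p : (Fin k → ℝ) → ℝ → (Fin l → ℝ) → ℝ)
    (i : Fin k) (U : Fin k → ℝ) (x : ℝ) (V : Fin l → ℝ) : ℝ :=
  deriv (fun s => p (Function.update U i s) x V) (U i)

/-- Partial derivative with respect to `v^{(j)}`. -/
noncomputable def dV {k l : ℕ} (p : (Fin k → ℝ) → ℝ → (Fin l → ℝ) → ℝ)
    (j : Fin l) (U : Fin k → ℝ) (x : ℝ) (V : Fin l → ℝ) : ℝ :=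
  deriv (fun s => p U x (Function.update V j s)) (V j)

/-- Partial derivative `p_x`. -/
noncomputable def dX {k l : ℕ} (p : (Fin k → ℝ) → ℝ → (Fin l → ℝ) → ℝ)
    (U : Fin k → ℝ) (x : ℝ) (V : Fin l → ℝ) : ℝ :=
  deriv (fun s => p U s V) x

/-- Second partial derivative `p_{xx}`. -/
noncomputable def dXX {k l : ℕ} (p : (Fin k → ℝ) → ℝ → (Fin l → ℝ) → ℝ)
    (U : Fin k → ℝ) (x : ℝ) (V : Fin l → ℝ) : ℝ :=
  deriv (fun s => dX p U s V) x

section Aux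
variable {k l : ℕ}

def HID (p : (Fin k → ℝ) → ℝ → (Fin l → ℝ) → ℝ)
    (r : (Fin k → ℝ) → ℝ → (Fin l → ℝ) → ℝ → ℝ)
    (f : ℝ → ℝ → ℝ → ℝ → ℝ) : Prop :=
  ∀ (U : Fin k → ℝ) (x : ℝ) (V : Fin l → ℝ) (w : ℝ),
      (∑ i : Fin k,
          (if h : (i : ℕ) + 1 < k then U ⟨(i : ℕ) + 1, h⟩ else r U x V w) *
            dU p i U x V) +
        (∑ j : Fin l,
          (if h : (j : ℕ) + 1 < l then V ⟨(j : ℕ) + 1, h⟩ else w) *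
            dV p j U x V) =
        f x (p U x V) (dX p U x V) (dXX p U x V)

variable {p : (Fin k → ℝ) → ℝ → (Fin l → ℝ) → ℝ}

lemma aux_diffV (hp : ContDiff ℝ (⊤ : ℕ∞) fun q : (Fin k → ℝ) × ℝ × (Fin l → ℝ) => p q.1 q.2.1 q.2.2)
    (U : Fin k → ℝ) (x : ℝ) (V : Fin l → ℝ) (c : Fin l) :
    Differentiable ℝ fun s => p U x (Function.update V c s) := by
  have h1 : ContDiff ℝ (⊤ : ℕ∞) fun s : ℝ =>
      ((U, x, Function.update V c s) : (Fin k → ℝ) × ℝ × (Fin l → ℝ)) :=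
    ContDiff.prodMk contDiff_const (ContDiff.prodMk contDiff_const (contDiff_update _ V c))
  exact (hp.comp h1).differentiable (by simp)

lemma aux_diffU (hp : ContDiff ℝ (⊤ : ℕ∞) fun q : (Fin k → ℝ) × ℝ × (Fin l → ℝ) => p q.1 q.2.1 q.2.2)
    (U : Fin k → ℝ) (x : ℝ) (V : Fin l → ℝ) (c : Fin k) :
    Differentiable ℝ fun s => p (Function.update U c s) x V := by
  have h1 : ContDiff ℝ (⊤ : ℕ∞) fun s : ℝ =>
      ((Function.update U c s, x, V) : (Fin k → ℝ) × ℝ × (Fin l → ℝ)) :=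
    ContDiff.prodMk (contDiff_update _ U c) (ContDiff.prodMk contDiff_const contDiff_const)
  exact (hp.comp h1).differentiable (by simp)

lemma aux_constV (hp : ContDiff ℝ (⊤ : ℕ∞) fun q : (Fin k → ℝ) × ℝ × (Fin l → ℝ) => p q.1 q.2.1 q.2.2)
    (c : Fin l) (hz : ∀ U x V, dV p c U x V = 0) :
    ∀ (U : Fin k → ℝ) (x : ℝ) (V : Fin l → ℝ) (s : ℝ),
      p U x (Function.update V c s) = p U x V := by
  intro U x V s
  have hd := aux_diffV hp U x V c
  have hz' : ∀ t, deriv (fun t' => p U x (Function.update V c t')) t = 0 := by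
    intro t
    have h := hz U x (Function.update V c t)
    unfold dV at h
    simpa [Function.update_idem, Function.update_self] using h
  have h2 := is_const_of_deriv_eq_zero hd hz' s (V c)
  simpa [Function.update_eq_self] using h2

lemma aux_constU (hp : ContDiff ℝ (⊤ : ℕ∞) fun q : (Fin k → ℝ) × ℝ × (Fin l → ℝ) => p q.1 q.2.1 q.2.2)
    (c : Fin k) (hz : ∀ U x V, dU p c U x V = 0) :
    ∀ (U : Fin k → ℝ) (x : ℝ) (V : Fin l → ℝ) (s : ℝ),
      p (Function.update U c s) x V = p U x V := by
  intro U x V s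
  have hd := aux_diffU hp U x V c
  have hz' : ∀ t, deriv (fun t' => p (Function.update U c t') x V) t = 0 := by
    intro t
    have h := hz (Function.update U c t) x V
    unfold dU at h
    simpa [Function.update_idem, Function.update_self] using h
  have h2 := is_const_of_deriv_eq_zero hd hz' s (U c)
  simpa [Function.update_eq_self] using h2

-- invariance under a dead V-coordinate
lemma aux_dV_invV {c : Fin l}
    (hc : ∀ (U : Fin k → ℝ) x V s, p U x (Function.update V c s) = p U x V)
    (j : Fin l) (hjc : j ≠ c) (U : Fin k → ℝ) (x : ℝ) (V : Fin l → ℝ) (s : ℝ) :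
    dV p j U x (Function.update V c s) = dV p j U x V := by
  unfold dV
  rw [Function.update_of_ne hjc]
  congr 1
  funext t
  rw [Function.update_comm (Ne.symm hjc)]
  exact hc U x (Function.update V j t) s

lemma aux_dU_invV {c : Fin l}
    (hc : ∀ (U : Fin k → ℝ) x V s, p U x (Function.update V c s) = p U x V)
    (i : Fin k) (U : Fin k → ℝ) (x : ℝ) (V : Fin l → ℝ) (s : ℝ) :
    dU p i U x (Function.update V c s) = dU p i U x V := by
  unfold dU
  congr 1
  funext t
  exact hc (Function.update U i t) x V s

lemma aux_dX_invV {c : Fin l}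
    (hc : ∀ (U : Fin k → ℝ) x V s, p U x (Function.update V c s) = p U x V)
    (U : Fin k → ℝ) (x : ℝ) (V : Fin l → ℝ) (s : ℝ) :
    dX p U x (Function.update V c s) = dX p U x V := by
  unfold dX
  congr 1
  funext y
  exact hc U y V s

lemma aux_dXX_invV {c : Fin l}
    (hc : ∀ (U : Fin k → ℝ) x V s, p U x (Function.update V c s) = p U x V)
    (U : Fin k → ℝ) (x : ℝ) (V : Fin l → ℝ) (s : ℝ) :
    dXX p U x (Function.update V c s) = dXX p U x V := by
  unfold dXX
  congr 1
  funext y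
  exact aux_dX_invV hc U y V s

-- invariance under a dead U-coordinate
lemma aux_dU_invU {c : Fin k}
    (hc : ∀ (U : Fin k → ℝ) x V s, p (Function.update U c s) x V = p U x V)
    (i : Fin k) (hic : i ≠ c) (U : Fin k → ℝ) (x : ℝ) (V : Fin l → ℝ) (s : ℝ) :
    dU p i (Function.update U c s) x V = dU p i U x V := by
  unfold dU
  rw [Function.update_of_ne hic]
  congr 1
  funext t
  rw [Function.update_comm (Ne.symm hic)]
  exact hc (Function.update U i t) x V s

lemma aux_dV_invU {c : Fin k}
    (hc : ∀ (U : Fin k → ℝ) x V s, p (Function.update U c s) x V = p U x V)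
    (j : Fin l) (U : Fin k → ℝ) (x : ℝ) (V : Fin l → ℝ) (s : ℝ) :
    dV p j (Function.update U c s) x V = dV p j U x V := by
  unfold dV
  congr 1
  funext t
  exact hc U x (Function.update V j t) s

lemma aux_dX_invU {c : Fin k}
    (hc : ∀ (U : Fin k → ℝ) x V s, p (Function.update U c s) x V = p U x V)
    (U : Fin k → ℝ) (x : ℝ) (V : Fin l → ℝ) (s : ℝ) :
    dX p (Function.update U c s) x V = dX p U x V := by
  unfold dX
  congr 1
  funext y
  exact hc U y V s

lemma aux_dXX_invU {c : Fin k}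
    (hc : ∀ (U : Fin k → ℝ) x V s, p (Function.update U c s) x V = p U x V)
    (U : Fin k → ℝ) (x : ℝ) (V : Fin l → ℝ) (s : ℝ) :
    dXX p (Function.update U c s) x V = dXX p U x V := by
  unfold dXX
  congr 1
  funext y
  exact aux_dX_invU hc U y V s

lemma aux_sum_top {n : ℕ} (hn : 0 < n) (a : ℝ) (d : Fin n → ℝ) :
    (∑ j : Fin n, (if (j : ℕ) + 1 < n then (0:ℝ) else a) * d j)
      = a * d ⟨n - 1, Nat.sub_lt hn Nat.one_pos⟩ := by
  rw [Finset.sum_eq_single (⟨n - 1, Nat.sub_lt hn Nat.one_pos⟩ : Fin n)]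
  · rw [if_neg (by simp; omega)]
  · intro b _ hb
    have hb' : (b : ℕ) ≠ n - 1 := fun h => hb (Fin.ext h)
    have hlt := b.isLt
    rw [if_pos (by omega), zero_mul]
  · intro h; exact absurd (Finset.mem_univ _) h

lemma aux_weq {r : (Fin k → ℝ) → ℝ → (Fin l → ℝ) → ℝ → ℝ} {f : ℝ → ℝ → ℝ → ℝ → ℝ}
    (hid : HID p r f) (U : Fin k → ℝ) (x : ℝ) (V : Fin l → ℝ) (w1 w2 : ℝ) :
    (∑ i : Fin k, (if (i : ℕ) + 1 < k then (0:ℝ) else r U x V w1 - r U x V w2) * dU p i U x V)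
      + (∑ j : Fin l, (if (j : ℕ) + 1 < l then (0:ℝ) else w1 - w2) * dV p j U x V) = 0 := by
  have e1 := hid U x V w1
  have e2 := hid U x V w2
  have hA : (∑ i : Fin k, (if (i : ℕ) + 1 < k then (0:ℝ) else r U x V w1 - r U x V w2) * dU p i U x V)
      = (∑ i : Fin k, (if h : (i : ℕ) + 1 < k then U ⟨(i : ℕ) + 1, h⟩ else r U x V w1) * dU p i U x V)
        - (∑ i : Fin k, (if h : (i : ℕ) + 1 < k then U ⟨(i : ℕ) + 1, h⟩ else r U x V w2) * dU p i U x V) := by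
    rw [← Finset.sum_sub_distrib]
    refine Finset.sum_congr rfl fun i _ => ?_
    by_cases h : (i : ℕ) + 1 < k
    · rw [if_pos h, dif_pos h, dif_pos h]; ring
    · rw [if_neg h, dif_neg h, dif_neg h]; ring
  have hB : (∑ j : Fin l, (if (j : ℕ) + 1 < l then (0:ℝ) else w1 - w2) * dV p j U x V)
      = (∑ j : Fin l, (if h : (j : ℕ) + 1 < l then V ⟨(j : ℕ) + 1, h⟩ else w1) * dV p j U x V)
        - (∑ j : Fin l, (if h : (j : ℕ) + 1 < l then V ⟨(j : ℕ) + 1, h⟩ else w2) * dV p j U x V) := by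
    rw [← Finset.sum_sub_distrib]
    refine Finset.sum_congr rfl fun j _ => ?_
    by_cases h : (j : ℕ) + 1 < l
    · rw [if_pos h, dif_pos h, dif_pos h]; ring
    · rw [if_neg h, dif_neg h, dif_neg h]; ring
  rw [hA, hB, sub_add_sub_comm, e1, e2, sub_self]

end Aux
section Step
variable {k l : ℕ} {p : (Fin k → ℝ) → ℝ → (Fin l → ℝ) → ℝ}
  {r : (Fin k → ℝ) → ℝ → (Fin l → ℝ) → ℝ → ℝ} {f : ℝ → ℝ → ℝ → ℝ → ℝ}

lemma aux_stepV
    (hp : ContDiff ℝ (⊤ : ℕ∞) fun q : (Fin k → ℝ) × ℝ × (Fin l → ℝ) => p q.1 q.2.1 q.2.2)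
    (hid : HID p r f) (m c : Fin l) (hmc : (c : ℕ) = (m : ℕ) + 1)
    (hU : ∀ i : Fin k, ¬((i : ℕ) + 1 < k) → ∀ U x V, dU p i U x V = 0)
    (hhigh : ∀ j : Fin l, (c : ℕ) ≤ (j : ℕ) → ∀ U x V, dV p j U x V = 0)
    (U : Fin k → ℝ) (x : ℝ) (V : Fin l → ℝ) :
    dV p m U x V = 0 := by
  have hcst := aux_constV hp c (hhigh c le_rfl)
  set s : ℝ := V c + 1 with hs
  set V' := Function.update V c s with hV'
  have e1 := hid U x V' 0
  have e2 := hid U x V 0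
  have hRHS : f x (p U x V') (dX p U x V') (dXX p U x V')
      = f x (p U x V) (dX p U x V) (dXX p U x V) := by
    rw [hV', hcst, aux_dX_invV hcst, aux_dXX_invV hcst]
  have hA : (∑ i : Fin k,
        (if h : (i : ℕ) + 1 < k then U ⟨(i : ℕ) + 1, h⟩ else r U x V' 0) * dU p i U x V')
      = (∑ i : Fin k,
        (if h : (i : ℕ) + 1 < k then U ⟨(i : ℕ) + 1, h⟩ else r U x V 0) * dU p i U x V) := by
    refine Finset.sum_congr rfl fun i _ => ?_
    by_cases h : (i : ℕ) + 1 < k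
    · rw [dif_pos h, dif_pos h, hV', aux_dU_invV hcst]
    · rw [hU i h U x V', hU i h U x V, mul_zero, mul_zero]
  have hB : (∑ j : Fin l,
        (if h : (j : ℕ) + 1 < l then V' ⟨(j : ℕ) + 1, h⟩ else (0:ℝ)) * dV p j U x V')
      - (∑ j : Fin l,
        (if h : (j : ℕ) + 1 < l then V ⟨(j : ℕ) + 1, h⟩ else (0:ℝ)) * dV p j U x V)
      = (s - V c) * dV p m U x V := by
    rw [← Finset.sum_sub_distrib, Finset.sum_eq_single m]
    · have hm1 : (m : ℕ) + 1 < l := by have := c.isLt; omega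
      have hidx : (⟨(m : ℕ) + 1, hm1⟩ : Fin l) = c := Fin.ext (by simp; omega)
      have hmne : m ≠ c := Fin.ne_of_val_ne (by omega)
      rw [dif_pos hm1, dif_pos hm1, hidx, hV', Function.update_self,
        aux_dV_invV hcst m hmne]
      ring
    · intro j _ hj
      have hjm : (j : ℕ) ≠ (m : ℕ) := fun h => hj (Fin.ext h)
      by_cases hjc : (c : ℕ) ≤ (j : ℕ)
      · rw [hhigh j hjc U x V', hhigh j hjc U x V, mul_zero, mul_zero, sub_self]
      · have h1 : (j : ℕ) + 1 < l := by have := c.isLt; omega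
        have hne : (⟨(j : ℕ) + 1, h1⟩ : Fin l) ≠ c := Fin.ne_of_val_ne (by simp; omega)
        have hjne : j ≠ c := Fin.ne_of_val_ne (by omega)
        rw [dif_pos h1, dif_pos h1, hV', Function.update_of_ne hne,
          aux_dV_invV hcst j hjne, sub_self]
    · intro h; exact absurd (Finset.mem_univ _) h
  have h0 : (s - V c) * dV p m U x V = 0 := by
    rw [← hB]
    rw [hA, hRHS] at e1
    linarith [e1, e2]
  have hs1 : s - V c = 1 := by rw [hs]; ring
  rw [hs1, one_mul] at h0
  exact h0

lemma aux_stepU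
    (hp : ContDiff ℝ (⊤ : ℕ∞) fun q : (Fin k → ℝ) × ℝ × (Fin l → ℝ) => p q.1 q.2.1 q.2.2)
    (hid : HID p r f) (m c : Fin k) (hmc : (c : ℕ) = (m : ℕ) + 1)
    (hhigh : ∀ i : Fin k, (c : ℕ) ≤ (i : ℕ) → ∀ U x V, dU p i U x V = 0)
    (U : Fin k → ℝ) (x : ℝ) (V : Fin l → ℝ) :
    dU p m U x V = 0 := by
  have hcst := aux_constU hp c (hhigh c le_rfl)
  set s : ℝ := U c + 1 with hs
  set U' := Function.update U c s with hU'
  have e1 := hid U' x V 0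
  have e2 := hid U x V 0
  have hRHS : f x (p U' x V) (dX p U' x V) (dXX p U' x V)
      = f x (p U x V) (dX p U x V) (dXX p U x V) := by
    rw [hU', hcst, aux_dX_invU hcst, aux_dXX_invU hcst]
  have hB : (∑ j : Fin l,
        (if h : (j : ℕ) + 1 < l then V ⟨(j : ℕ) + 1, h⟩ else (0:ℝ)) * dV p j U' x V)
      = (∑ j : Fin l,
        (if h : (j : ℕ) + 1 < l then V ⟨(j : ℕ) + 1, h⟩ else (0:ℝ)) * dV p j U x V) := by
    refine Finset.sum_congr rfl fun j _ => ?_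
    rw [hU', aux_dV_invU hcst]
  have hA : (∑ i : Fin k,
        (if h : (i : ℕ) + 1 < k then U' ⟨(i : ℕ) + 1, h⟩ else r U' x V 0) * dU p i U' x V)
      - (∑ i : Fin k,
        (if h : (i : ℕ) + 1 < k then U ⟨(i : ℕ) + 1, h⟩ else r U x V 0) * dU p i U x V)
      = (s - U c) * dU p m U x V := by
    rw [← Finset.sum_sub_distrib, Finset.sum_eq_single m]
    · have hm1 : (m : ℕ) + 1 < k := by have := c.isLt; omega
      have hidx : (⟨(m : ℕ) + 1, hm1⟩ : Fin k) = c := Fin.ext (by simp; omega)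
      have hmne : m ≠ c := Fin.ne_of_val_ne (by omega)
      rw [dif_pos hm1, dif_pos hm1, hidx, hU', Function.update_self,
        aux_dU_invU hcst m hmne]
      ring
    · intro i _ hi
      have him : (i : ℕ) ≠ (m : ℕ) := fun h => hi (Fin.ext h)
      by_cases hic : (c : ℕ) ≤ (i : ℕ)
      · rw [hhigh i hic U' x V, hhigh i hic U x V, mul_zero, mul_zero, sub_self]
      · have h1 : (i : ℕ) + 1 < k := by have := c.isLt; omega
        have hne : (⟨(i : ℕ) + 1, h1⟩ : Fin k) ≠ c := Fin.ne_of_val_ne (by simp; omega)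
        have hine : i ≠ c := Fin.ne_of_val_ne (by omega)
        rw [dif_pos h1, dif_pos h1, hU', Function.update_of_ne hne,
          aux_dU_invU hcst i hine, sub_self]
    · intro h; exact absurd (Finset.mem_univ _) h
  have h0 : (s - U c) * dU p m U x V = 0 := by
    rw [← hA]
    rw [hB, hRHS] at e1
    linarith [e1, e2]
  have hs1 : s - U c = 1 := by rw [hs]; ring
  rw [hs1, one_mul] at h0
  exact h0

end Step
section Top
variable {k l : ℕ} {p : (Fin k → ℝ) → ℝ → (Fin l → ℝ) → ℝ}
  {r : (Fin k → ℝ) → ℝ → (Fin l → ℝ) → ℝ → ℝ} {f : ℝ → ℝ → ℝ → ℝ → ℝ}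

/-- From the top-U condition, derive the top-V condition. -/
lemma aux_topV (hid : HID p r f)
    (hU : ∀ i : Fin k, ¬((i : ℕ) + 1 < k) → ∀ U x V, dU p i U x V = 0) :
    ∀ j : Fin l, ¬((j : ℕ) + 1 < l) → ∀ U x V, dV p j U x V = 0 := by
  intro j hj U x V
  have hw := aux_weq hid U x V 1 0
  have hA : (∑ i : Fin k, (if (i : ℕ) + 1 < k then (0:ℝ)
      else r U x V 1 - r U x V 0) * dU p i U x V) = 0 := by
    refine Finset.sum_eq_zero fun i _ => ?_
    by_cases h : (i : ℕ) + 1 < k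
    · rw [if_pos h, zero_mul]
    · rw [hU i h U x V, mul_zero]
  have hl : 0 < l := j.pos
  rw [hA, zero_add, aux_sum_top hl] at hw
  have hj' : j = ⟨l - 1, Nat.sub_lt hl Nat.one_pos⟩ :=
    Fin.ext (by have := j.isLt; simp; omega)
  rw [hj']
  have h1 : (1:ℝ) - 0 ≠ 0 := by norm_num
  exact (mul_eq_zero.mp hw).resolve_left h1

/-- From the top-V condition, derive the top-U condition (uses `hrv`). -/
lemma aux_topU (hid : HID p r f)
    (hrv : ∀ (U : Fin k → ℝ) (x : ℝ) (V : Fin l → ℝ) (w : ℝ), deriv (r U x V) w ≠ 0)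
    (hV : ∀ j : Fin l, ¬((j : ℕ) + 1 < l) → ∀ U x V, dV p j U x V = 0) :
    ∀ i : Fin k, ¬((i : ℕ) + 1 < k) → ∀ U x V, dU p i U x V = 0 := by
  intro i hi U x V
  have hex : ∃ w1 : ℝ, r U x V w1 ≠ r U x V 0 := by
    by_contra hcon
    push_neg at hcon
    have hconst : r U x V = fun _ => r U x V 0 := funext hcon
    have := hrv U x V 0
    rw [hconst] at this
    simp at this
  obtain ⟨w1, hw1⟩ := hex
  have hw := aux_weq hid U x V w1 0
  have hB : (∑ j : Fin l, (if (j : ℕ) + 1 < l then (0:ℝ)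
      else w1 - 0) * dV p j U x V) = 0 := by
    refine Finset.sum_eq_zero fun j _ => ?_
    by_cases h : (j : ℕ) + 1 < l
    · rw [if_pos h, zero_mul]
    · rw [hV j h U x V, mul_zero]
  have hk : 0 < k := i.pos
  rw [hB, add_zero, aux_sum_top hk] at hw
  have hi' : i = ⟨k - 1, Nat.sub_lt hk Nat.one_pos⟩ :=
    Fin.ext (by have := i.isLt; simp; omega)
  rw [hi']
  exact (mul_eq_zero.mp hw).resolve_left (sub_ne_zero.mpr hw1)

/-- Downward induction: top-U condition kills all U-derivatives. -/
lemma aux_downU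
    (hp : ContDiff ℝ (⊤ : ℕ∞) fun q : (Fin k → ℝ) × ℝ × (Fin l → ℝ) => p q.1 q.2.1 q.2.2)
    (hid : HID p r f)
    (hU : ∀ i : Fin k, ¬((i : ℕ) + 1 < k) → ∀ U x V, dU p i U x V = 0) :
    ∀ (i : Fin k) (U : Fin k → ℝ) (x : ℝ) (V : Fin l → ℝ), dU p i U x V = 0 := by
  have main : ∀ t : ℕ, ∀ i : Fin k, k ≤ (i : ℕ) + 1 + t →
      ∀ U x V, dU p i U x V = 0 := by
    intro t
    induction t with
    | zero => intro i hi; exact hU i (by omega)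
    | succ t ih =>
      intro i hi U x V
      by_cases hcase : k ≤ (i : ℕ) + 1 + t
      · exact ih i hcase U x V
      · have hil : (i : ℕ) + 1 < k := by omega
        exact aux_stepU hp hid i ⟨(i : ℕ) + 1, hil⟩ rfl
          (fun i' hi' U x V => ih i' (by simp at hi'; omega) U x V) U x V
  intro i U x V
  exact main k i (by omega) U x V

/-- Downward induction: top conditions kill all V-derivatives. -/
lemma aux_downV
    (hp : ContDiff ℝ (⊤ : ℕ∞) fun q : (Fin k → ℝ) × ℝ × (Fin l → ℝ) => p q.1 q.2.1 q.2.2)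
    (hid : HID p r f)
    (hU : ∀ i : Fin k, ¬((i : ℕ) + 1 < k) → ∀ U x V, dU p i U x V = 0) :
    ∀ (j : Fin l) (U : Fin k → ℝ) (x : ℝ) (V : Fin l → ℝ), dV p j U x V = 0 := by
  have main : ∀ t : ℕ, ∀ j : Fin l, l ≤ (j : ℕ) + 1 + t →
      ∀ U x V, dV p j U x V = 0 := by
    intro t
    induction t with
    | zero => intro j hj; exact aux_topV hid hU j (by omega)
    | succ t ih =>
      intro j hj U x V
      by_cases hcase : l ≤ (j : ℕ) + 1 + t
      · exact ih j hcase U x V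
      · have hjl : (j : ℕ) + 1 < l := by omega
        exact aux_stepV hp hid j ⟨(j : ℕ) + 1, hjl⟩ rfl hU
          (fun j' hj' U x V => ih j' (by simp at hj'; omega) U x V) U x V
  intro j U x V
  exact main l j (by omega) U x V

end Top


/-- Lemma C.1 of the paper: if
`Σ_{i=0}^{k−2} u^{(i+1)} p_{u^{(i)}} + r p_{u^{(k−1)}} + Σ_{i=0}^{ℓ−1} v^{(i+1)} p_{v^{(i)}}
 = f(x, p, p_x, p_{xx})`
holds identically, with `∂r/∂v^{(ℓ)}` nowhere zero, then either `p` depends on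
`x` only, or `k ≥ 1`, `ℓ ≥ 1`, `p_{u^{(k−1)}} ≢ 0` and `p_{v^{(ℓ−1)}} ≢ 0`. -/
theorem stmt13 (k l : ℕ)
    (p : (Fin k → ℝ) → ℝ → (Fin l → ℝ) → ℝ)
    (r : (Fin k → ℝ) → ℝ → (Fin l → ℝ) → ℝ → ℝ)
    (f : ℝ → ℝ → ℝ → ℝ → ℝ)
    (hp : ContDiff ℝ (⊤ : ℕ∞) fun q : (Fin k → ℝ) × ℝ × (Fin l → ℝ) => p q.1 q.2.1 q.2.2)
    (hr : ContDiff ℝ (⊤ : ℕ∞) fun q : ((Fin k → ℝ) × ℝ × (Fin l → ℝ)) × ℝ =>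
      r q.1.1 q.1.2.1 q.1.2.2 q.2)
    (hf : ContDiff ℝ (⊤ : ℕ∞) fun q : ℝ × ℝ × ℝ × ℝ => f q.1 q.2.1 q.2.2.1 q.2.2.2)
    (hrv : ∀ (U : Fin k → ℝ) (x : ℝ) (V : Fin l → ℝ) (w : ℝ),
      deriv (r U x V) w ≠ 0)
    (hid : ∀ (U : Fin k → ℝ) (x : ℝ) (V : Fin l → ℝ) (w : ℝ),
      (∑ i : Fin k,
          (if h : (i : ℕ) + 1 < k then U ⟨(i : ℕ) + 1, h⟩ else r U x V w) *
            dU p i U x V) +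
        (∑ j : Fin l,
          (if h : (j : ℕ) + 1 < l then V ⟨(j : ℕ) + 1, h⟩ else w) *
            dV p j U x V) =
        f x (p U x V) (dX p U x V) (dXX p U x V)) :
    ((∀ (i : Fin k) (U : Fin k → ℝ) (x : ℝ) (V : Fin l → ℝ), dU p i U x V = 0) ∧
      (∀ (j : Fin l) (U : Fin k → ℝ) (x : ℝ) (V : Fin l → ℝ), dV p j U x V = 0)) ∨
    (∃ (hk : 0 < k) (hl : 0 < l),
      (∃ (U : Fin k → ℝ) (x : ℝ) (V : Fin l → ℝ),
        dU p ⟨k - 1, Nat.sub_lt hk Nat.one_pos⟩ U x V ≠ 0) ∧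
      (∃ (U : Fin k → ℝ) (x : ℝ) (V : Fin l → ℝ),
        dV p ⟨l - 1, Nat.sub_lt hl Nat.one_pos⟩ U x V ≠ 0)) := by
  have hid' : HID p r f := hid
  rcases Nat.eq_zero_or_pos k with hk0 | hk0
  · have hU : ∀ i : Fin k, ¬((i : ℕ) + 1 < k) → ∀ U x V, dU p i U x V = 0 :=
      fun i => absurd i.isLt (by omega)
    exact Or.inl ⟨aux_downU hp hid' hU, aux_downV hp hid' hU⟩
  rcases Nat.eq_zero_or_pos l with hl0 | hl0
  · have hV : ∀ j : Fin l, ¬((j : ℕ) + 1 < l) → ∀ U x V, dV p j U x V = 0 :=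
      fun j => absurd j.isLt (by omega)
    have hU := aux_topU hid' hrv hV
    exact Or.inl ⟨aux_downU hp hid' hU, aux_downV hp hid' hU⟩
  by_cases hA : ∀ U x V, dU p ⟨k - 1, Nat.sub_lt hk0 Nat.one_pos⟩ U x V = 0
  · have hU : ∀ i : Fin k, ¬((i : ℕ) + 1 < k) → ∀ U x V, dU p i U x V = 0 := by
      intro i hi U x V
      have : i = ⟨k - 1, Nat.sub_lt hk0 Nat.one_pos⟩ :=
        Fin.ext (by have := i.isLt; simp; omega)
      rw [this]; exact hA U x V
    exact Or.inl ⟨aux_downU hp hid' hU, aux_downV hp hid' hU⟩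
  · push_neg at hA
    obtain ⟨U, x, V, hUne⟩ := hA
    refine Or.inr ⟨hk0, hl0, ⟨U, x, V, hUne⟩, ?_⟩
    by_contra hcon
    push_neg at hcon
    have hV : ∀ j : Fin l, ¬((j : ℕ) + 1 < l) → ∀ U x V, dV p j U x V = 0 := by
      intro j hj U' x' V'
      have : j = ⟨l - 1, Nat.sub_lt hl0 Nat.one_pos⟩ :=
        Fin.ext (by have := j.isLt; simp; omega)
      rw [this]; exact hcon U' x' V'
    exact hUne (aux_topU hid' hrv hV ⟨k - 1, Nat.sub_lt hk0 Nat.one_pos⟩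
      (by simp; omega) U x V)
end
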